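/- Let A ∈ ℝ^{q×p}, b ∈ ℝ^q, x₀ ∈ ℝ^p, β > 0. Let x⋆ = (AᵀA + βI)⁻¹(Aᵀb + βx₀) be the minimizer of ‖Ax − b‖² + β‖x − x₀‖², and let x̂ be the minimizer of the same problem with A replaced by A + δA and b by b + δb. Then ‖x̂ − x⋆‖ ≤ (1/β)·(‖P‖‖x⋆‖ + ‖δA‖‖b‖ + ‖δb‖‖A‖ + ‖δb‖‖δA‖), where P = (A+δA)ᵀ(A+δA) − AᵀA. -/

import Mathlib

/-! With `M = AᵀA + βI` and `N = (A + δA)ᵀ(A + δA) + βI = M + P`, subtracting the two normal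
equations gives `N (x̂ - x⋆) = δAᵀb + Aᵀδb + δAᵀδb - P x⋆`. Since `wᵀNw ≥ β‖w‖²`, Cauchy–Schwarz
yields `‖Nw‖ ≥ β‖w‖`, so `N` is invertible with `‖N⁻¹‖ ≤ 1/β`; the triangle inequality and
`‖δAᵀ‖ = ‖δA‖` finish the estimate. -/

open Matrix

noncomputable def vnorm {n : Type*} [Fintype n] (v : n → ℝ) : ℝ :=
  ‖(WithLp.equiv 2 (n → ℝ)).symm v‖

noncomputable def mnorm {m n : Type*} [Fintype m] [Fintype n] [DecidableEq n]
    (M : Matrix m n ℝ) : ℝ :=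
  ‖LinearMap.toContinuousLinearMap (Matrix.toEuclideanLin M)‖

section Norms

variable {m n : Type*} [Fintype m] [Fintype n]

lemma vnorm_nonneg (v : n → ℝ) : 0 ≤ vnorm v :=
  norm_nonneg _

lemma vnorm_add_le (v w : n → ℝ) : vnorm (v + w) ≤ vnorm v + vnorm w :=
  norm_add_le _ _

lemma vnorm_sub_le (v w : n → ℝ) : vnorm (v - w) ≤ vnorm v + vnorm w :=
  norm_sub_le _ _

lemma dotProduct_self_eq_vnorm_sq (v : n → ℝ) : v ⬝ᵥ v = vnorm v ^ 2 := by
  rw [vnorm, ← real_inner_self_eq_norm_sq, WithLp.equiv_symm_apply,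
    EuclideanSpace.inner_toLp_toLp, star_trivial]

lemma dotProduct_le_vnorm_mul_vnorm (v w : n → ℝ) : v ⬝ᵥ w ≤ vnorm v * vnorm w := by
  have h := real_inner_le_norm (WithLp.toLp 2 w) (WithLp.toLp 2 v)
  rwa [EuclideanSpace.inner_toLp_toLp, star_trivial, mul_comm] at h

variable [DecidableEq n]

lemma vnorm_mulVec_le (M : Matrix m n ℝ) (v : n → ℝ) :
    vnorm (M *ᵥ v) ≤ mnorm M * vnorm v :=
  (LinearMap.toContinuousLinearMap (Matrix.toEuclideanLin M)).le_opNorm _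

lemma mnorm_transpose [DecidableEq m] (M : Matrix m n ℝ) : mnorm Mᵀ = mnorm M := by
  rw [mnorm, ← conjTranspose_eq_transpose_of_trivial, toEuclideanLin_conjTranspose_eq_adjoint,
    LinearMap.adjoint_toContinuousLinearMap]
  exact ContinuousLinearMap.adjoint.norm_map _

end Norms

lemma mulVec_inv_mulVec {n α : Type*} [Fintype n] [DecidableEq n] [CommRing α]
    {M : Matrix n n α} (hM : IsUnit M.det) (v : n → α) : M *ᵥ (M⁻¹ *ᵥ v) = v := by
  rw [mulVec_mulVec, mul_nonsing_inv M hM, one_mulVec]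

lemma inv_mulVec_sub {n α : Type*} [Fintype n] [DecidableEq n] [CommRing α]
    {M : Matrix n n α} (hM : IsUnit M.det) (c x : n → α) : M⁻¹ *ᵥ c - x = M⁻¹ *ᵥ (c - M *ᵥ x) := by
  rw [mulVec_sub, mulVec_mulVec, nonsing_inv_mul M hM, one_mulVec]

section Coercive

variable {n : Type*} [Fintype n] {M : Matrix n n ℝ} {β : ℝ}

lemma mul_vnorm_le_vnorm_mulVec (hM : ∀ w, β * (w ⬝ᵥ w) ≤ w ⬝ᵥ (M *ᵥ w)) (w : n → ℝ) :
    β * vnorm w ≤ vnorm (M *ᵥ w) := by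
  have key : vnorm w * (β * vnorm w) ≤ vnorm w * vnorm (M *ᵥ w) := by
    calc vnorm w * (β * vnorm w) = β * (w ⬝ᵥ w) := by rw [dotProduct_self_eq_vnorm_sq]; ring
      _ ≤ w ⬝ᵥ (M *ᵥ w) := hM w
      _ ≤ vnorm w * vnorm (M *ᵥ w) := dotProduct_le_vnorm_mul_vnorm _ _
  rcases (vnorm_nonneg w).eq_or_lt with hw | hw
  · rw [← hw, mul_zero]; exact vnorm_nonneg _
  · exact le_of_mul_le_mul_left key hw

variable [DecidableEq n]

lemma isUnit_det_of_coercive (hβ : 0 < β) (hM : ∀ w, β * (w ⬝ᵥ w) ≤ w ⬝ᵥ (M *ᵥ w)) :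
    IsUnit M.det := by
  refine (isUnit_iff_isUnit_det M).mp <| mulVec_injective_iff_isUnit.mp fun v w hvw => ?_
  have h := hM (v - w)
  rw [mulVec_sub, hvw, sub_self, dotProduct_zero] at h
  refine sub_eq_zero.mp <| dotProduct_self_eq_zero.mp (le_antisymm ?_ ?_)
  · exact nonpos_of_mul_nonpos_right h hβ
  · rw [dotProduct_self_eq_vnorm_sq]; positivity

lemma vnorm_inv_mulVec_le (hβ : 0 < β) (hM : ∀ w, β * (w ⬝ᵥ w) ≤ w ⬝ᵥ (M *ᵥ w))
    (r : n → ℝ) : vnorm (M⁻¹ *ᵥ r) ≤ β⁻¹ * vnorm r := by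
  rw [le_inv_mul_iff₀ hβ]
  simpa only [mulVec_inv_mulVec (isUnit_det_of_coercive hβ hM)] using
    mul_vnorm_le_vnorm_mulVec hM (M⁻¹ *ᵥ r)

end Coercive

section Perturbation

variable {m n : Type*} [Fintype m] [Fintype n]

lemma perturbed_normal_residual {A δA : Matrix m n ℝ} {b δb : m → ℝ} {R : Matrix n n ℝ}
    {c x : n → ℝ} (hx : (Aᵀ * A + R) *ᵥ x = Aᵀ *ᵥ b + c) :
    (A + δA)ᵀ *ᵥ (b + δb) + c - ((A + δA)ᵀ * (A + δA) + R) *ᵥ x =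
      δAᵀ *ᵥ b + Aᵀ *ᵥ δb + δAᵀ *ᵥ δb - ((A + δA)ᵀ * (A + δA) - Aᵀ * A) *ᵥ x := by
  have hsplit : (A + δA)ᵀ * (A + δA) + R = (Aᵀ * A + R) + ((A + δA)ᵀ * (A + δA) - Aᵀ * A) := by
    abel
  rw [hsplit, add_mulVec, hx, transpose_add, add_mulVec, mulVec_add, mulVec_add]
  abel

variable [DecidableEq n]

lemma mul_dotProduct_self_le_dotProduct_gram_add_smul_mulVec (B : Matrix m n ℝ) (β : ℝ)
    (w : n → ℝ) : β * (w ⬝ᵥ w) ≤ w ⬝ᵥ ((Bᵀ * B + β • 1) *ᵥ w) := by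
  rw [add_mulVec, dotProduct_add, smul_mulVec, one_mulVec, dotProduct_smul, smul_eq_mul,
    ← mulVec_mulVec, dotProduct_mulVec, vecMul_transpose, dotProduct_self_eq_vnorm_sq (B *ᵥ w)]
  linarith [sq_nonneg (vnorm (B *ᵥ w))]

variable [DecidableEq m]

lemma vnorm_perturbed_normal_residual_le (A δA : Matrix m n ℝ) (b δb : m → ℝ)
    (P : Matrix n n ℝ) (x : n → ℝ) :
    vnorm (δAᵀ *ᵥ b + Aᵀ *ᵥ δb + δAᵀ *ᵥ δb - P *ᵥ x) ≤
      mnorm P * vnorm x + mnorm δA * vnorm b + vnorm δb * mnorm A + vnorm δb * mnorm δA := by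
  have hT (B : Matrix m n ℝ) (v : m → ℝ) : vnorm (Bᵀ *ᵥ v) ≤ vnorm v * mnorm B := by
    rw [mul_comm, ← mnorm_transpose B]; exact vnorm_mulVec_le _ _
  calc _ ≤ vnorm (δAᵀ *ᵥ b) + vnorm (Aᵀ *ᵥ δb) + vnorm (δAᵀ *ᵥ δb) + vnorm (P *ᵥ x) := by
        grw [vnorm_sub_le, vnorm_add_le, vnorm_add_le]
    _ ≤ vnorm b * mnorm δA + vnorm δb * mnorm A + vnorm δb * mnorm δA + mnorm P * vnorm x := by
        gcongr
        exacts [hT _ _, hT _ _, hT _ _, vnorm_mulVec_le _ _]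
    _ = _ := by ring

end Perturbation

theorem regularized_least_squares_stability (p q : ℕ)
    (A δA : Matrix (Fin q) (Fin p) ℝ) (b δb : Fin q → ℝ)
    (x₀ : Fin p → ℝ) (β : ℝ) (hβ : 0 < β)
    (xs : Fin p → ℝ)
    (hxs : xs = (Aᵀ * A + β • 1)⁻¹ *ᵥ (Aᵀ *ᵥ b + β • x₀))
    (xh : Fin p → ℝ)
    (hxh : xh = ((A + δA)ᵀ * (A + δA) + β • 1)⁻¹ *ᵥ
      ((A + δA)ᵀ *ᵥ (b + δb) + β • x₀))
    (P : Matrix (Fin p) (Fin p) ℝ)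
    (hP : P = (A + δA)ᵀ * (A + δA) - Aᵀ * A) :
    vnorm (xh - xs) ≤
      (1 / β) * (mnorm P * vnorm xs + mnorm δA * vnorm b +
        vnorm δb * mnorm A + vnorm δb * mnorm δA) := by
  have hM := mul_dotProduct_self_le_dotProduct_gram_add_smul_mulVec A β
  have hN := mul_dotProduct_self_le_dotProduct_gram_add_smul_mulVec (A + δA) β
  have hMxs : (Aᵀ * A + β • 1) *ᵥ xs = Aᵀ *ᵥ b + β • x₀ :=
    hxs ▸ mulVec_inv_mulVec (isUnit_det_of_coercive hβ hM) _
  rw [hxh, inv_mulVec_sub (isUnit_det_of_coercive hβ hN), perturbed_normal_residual hMxs, ← hP,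
    one_div]
  exact (vnorm_inv_mulVec_le hβ hN _).trans <| mul_le_mul_of_nonneg_left
    (vnorm_perturbed_normal_residual_le A δA b δb P xs) (inv_nonneg.mpr hβ.le)
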